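/- Let S = ⟨n₁, n₂, n₃, n₄⟩ be a symmetric numerical semigroup minimally generated by four elements such that the associated monomial curve is not a complete intersection. Then in Bresinsky's presentation with f₁ = x₁^{α₁} - x₃^{α₁₃}x₄^{α₁₄}, f₂ = x₂^{α₂} - x₁^{α₂₁}x₄^{α₂₄}, f₃ = x₃^{α₃} - x₁^{α₃₁}x₂^{α₃₂}, f₄ = x₄^{α₄} - x₂^{α₄₂}x₃^{α₄₃}, f₅ = x₁^{α₂₁}x₃^{α₄₃} - x₂^{α₃₂}x₄^{α₁₄}, the relations α₁ = α₂₁ + α₃₁, α₂ = α₃₂ + α₄₂, α₃ = α₁₃ + α₄₃, and α₄ = α₁₄ + α₂₄ hold. -/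
import Mathlib


open MvPolynomial

private lemma bres_pow_inj {k : Type*} [Field k] {a b : ℕ}
    (h : (Polynomial.X : Polynomial k) ^ a = Polynomial.X ^ b) : a = b := by
  have := congrArg Polynomial.natDegree h
  simpa [Polynomial.natDegree_X_pow] using this

private lemma bres_ker_eq {k : Type*} [Field k] (n : Fin 4 → ℕ)
    {i₁ i₂ i₃ : Fin 4} {a b c : ℕ}
    (h : (X i₁ ^ a - X i₂ ^ b * X i₃ ^ c : MvPolynomial (Fin 4) k) ∈
      RingHom.ker (MvPolynomial.aeval
        (fun i : Fin 4 => (Polynomial.X : Polynomial k) ^ n i)).toRingHom) :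
    n i₁ * a = n i₂ * b + n i₃ * c := by
  rw [RingHom.mem_ker] at h
  simp only [map_sub, map_mul, map_pow, AlgHom.toRingHom_eq_coe, RingHom.coe_coe, aeval_X,
    ← pow_mul, ← pow_add, sub_eq_zero] at h
  exact bres_pow_inj h

private lemma bres_ker_eq' {k : Type*} [Field k] (n : Fin 4 → ℕ)
    {i₁ i₂ i₃ i₄ : Fin 4} {a b c d : ℕ}
    (h : (X i₁ ^ a * X i₂ ^ b - X i₃ ^ c * X i₄ ^ d : MvPolynomial (Fin 4) k) ∈
      RingHom.ker (MvPolynomial.aeval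
        (fun i : Fin 4 => (Polynomial.X : Polynomial k) ^ n i)).toRingHom) :
    n i₁ * a + n i₂ * b = n i₃ * c + n i₄ * d := by
  rw [RingHom.mem_ker] at h
  simp only [map_sub, map_mul, map_pow, AlgHom.toRingHom_eq_coe, RingHom.coe_coe, aeval_X,
    ← pow_mul, ← pow_add, sub_eq_zero] at h
  exact bres_pow_inj h

private lemma bres_mem_closure (n : Fin 4 → ℕ) (i j₁ j₂ : Fin 4)
    (h₁ : j₁ ≠ i) (h₂ : j₂ ≠ i) (a b : ℕ) :
    a * n j₁ + b * n j₂ ∈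
      AddSubmonoid.closure {m' : ℕ | ∃ j : Fin 4, j ≠ i ∧ n j = m'} := by
  have hm₁ : n j₁ ∈ AddSubmonoid.closure {m' : ℕ | ∃ j : Fin 4, j ≠ i ∧ n j = m'} :=
    AddSubmonoid.subset_closure ⟨j₁, h₁, rfl⟩
  have hm₂ : n j₂ ∈ AddSubmonoid.closure {m' : ℕ | ∃ j : Fin 4, j ≠ i ∧ n j = m'} :=
    AddSubmonoid.subset_closure ⟨j₂, h₂, rfl⟩
  have : a * n j₁ + b * n j₂ = a • n j₁ + b • n j₂ := by simp [smul_eq_mul]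
  rw [this]
  exact AddSubmonoid.add_mem _ (nsmul_mem hm₁ a) (nsmul_mem hm₂ b)

/-- Bresinsky's theorem (relation part): if `S = ⟨n₁,n₂,n₃,n₄⟩` is a symmetric numerical
semigroup minimally generated by four elements whose toric ideal `I_S` is not a complete
intersection, and `I_S` is generated by the five binomials of Bresinsky's presentation
with `0 < α_{ij} < α_j` and each `α_i` minimal with `α_i n_i` in the semigroup generated
by the other generators, then `α₁ = α₂₁ + α₃₁`, `α₂ = α₃₂ + α₄₂`, `α₃ = α₁₃ + α₄₃` and
`α₄ = α₁₄ + α₂₄`.  Here `X 0, X 1, X 2, X 3` play the roles of `x₁, x₂, x₃, x₄`. -/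
theorem stmt1 {k : Type*} [Field k]
    (n : Fin 4 → ℕ) (hpos : ∀ i, 0 < n i)
    (hord : n 0 < n 1 ∧ n 1 < n 2 ∧ n 2 < n 3)
    (hgcd : Nat.gcd (Nat.gcd (n 0) (n 1)) (Nat.gcd (n 2) (n 3)) = 1)
    (hminGen : ∀ i : Fin 4,
      n i ∉ AddSubmonoid.closure {m : ℕ | ∃ j : Fin 4, j ≠ i ∧ n j = m})
    -- `S` is symmetric, where `F` is the Frobenius number of `S`
    (F : ℕ) (hF : IsGreatest {m : ℕ | m ∉ AddSubmonoid.closure (Set.range n)} F)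
    (hsym : ∀ x : ℤ,
      (0 ≤ x ∧ x.toNat ∈ AddSubmonoid.closure (Set.range n)) ∨
      (0 ≤ (F : ℤ) - x ∧ ((F : ℤ) - x).toNat ∈ AddSubmonoid.closure (Set.range n)))
    (α₁ α₂ α₃ α₄ α₁₃ α₁₄ α₂₁ α₂₄ α₃₁ α₃₂ α₄₂ α₄₃ : ℕ)
    -- each `α_i` is minimal with `α_i n_i` in the semigroup generated by the others
    (hα₁ : IsLeast {m : ℕ | 0 < m ∧
      m * n 0 ∈ AddSubmonoid.closure {m' : ℕ | ∃ j : Fin 4, j ≠ 0 ∧ n j = m'}} α₁)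
    (hα₂ : IsLeast {m : ℕ | 0 < m ∧
      m * n 1 ∈ AddSubmonoid.closure {m' : ℕ | ∃ j : Fin 4, j ≠ 1 ∧ n j = m'}} α₂)
    (hα₃ : IsLeast {m : ℕ | 0 < m ∧
      m * n 2 ∈ AddSubmonoid.closure {m' : ℕ | ∃ j : Fin 4, j ≠ 2 ∧ n j = m'}} α₃)
    (hα₄ : IsLeast {m : ℕ | 0 < m ∧
      m * n 3 ∈ AddSubmonoid.closure {m' : ℕ | ∃ j : Fin 4, j ≠ 3 ∧ n j = m'}} α₄)
    -- `0 < α_{ij} < α_j`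
    (h13 : 0 < α₁₃ ∧ α₁₃ < α₃) (h14 : 0 < α₁₄ ∧ α₁₄ < α₄)
    (h21 : 0 < α₂₁ ∧ α₂₁ < α₁) (h24 : 0 < α₂₄ ∧ α₂₄ < α₄)
    (h31 : 0 < α₃₁ ∧ α₃₁ < α₁) (h32 : 0 < α₃₂ ∧ α₃₂ < α₂)
    (h42 : 0 < α₄₂ ∧ α₄₂ < α₂) (h43 : 0 < α₄₃ ∧ α₄₃ < α₃)
    -- the toric ideal `I_S` is generated by the five binomials
    (hgen : RingHom.ker (MvPolynomial.aeval
        (fun i : Fin 4 => (Polynomial.X : Polynomial k) ^ n i)).toRingHom =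
      Ideal.span ({X 0 ^ α₁ - X 2 ^ α₁₃ * X 3 ^ α₁₄,
                  X 1 ^ α₂ - X 0 ^ α₂₁ * X 3 ^ α₂₄,
                  X 2 ^ α₃ - X 0 ^ α₃₁ * X 1 ^ α₃₂,
                  X 3 ^ α₄ - X 1 ^ α₄₂ * X 2 ^ α₄₃,
                  X 0 ^ α₂₁ * X 2 ^ α₄₃ - X 1 ^ α₃₂ * X 3 ^ α₁₄} : Set (MvPolynomial (Fin 4) k)))
    -- `I_S` is not a complete intersection
    (hnotCI : ¬ ∃ g : Fin 3 → MvPolynomial (Fin 4) k,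
      Ideal.span (Set.range g) = RingHom.ker (MvPolynomial.aeval
        (fun i : Fin 4 => (Polynomial.X : Polynomial k) ^ n i)).toRingHom) :
    α₁ = α₂₁ + α₃₁ ∧ α₂ = α₃₂ + α₄₂ ∧ α₃ = α₁₃ + α₄₃ ∧ α₄ = α₁₄ + α₂₄ := by
  -- extract the five exponent relations from kernel membership
  have mem₁ : (X 0 ^ α₁ - X 2 ^ α₁₃ * X 3 ^ α₁₄ : MvPolynomial (Fin 4) k) ∈
      RingHom.ker (MvPolynomial.aeval
        (fun i : Fin 4 => (Polynomial.X : Polynomial k) ^ n i)).toRingHom := by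
    rw [hgen]; exact Ideal.subset_span (Set.mem_insert _ _)
  have mem₂ : (X 1 ^ α₂ - X 0 ^ α₂₁ * X 3 ^ α₂₄ : MvPolynomial (Fin 4) k) ∈
      RingHom.ker (MvPolynomial.aeval
        (fun i : Fin 4 => (Polynomial.X : Polynomial k) ^ n i)).toRingHom := by
    rw [hgen]; exact Ideal.subset_span (Set.mem_insert_of_mem _ (Set.mem_insert _ _))
  have mem₃ : (X 2 ^ α₃ - X 0 ^ α₃₁ * X 1 ^ α₃₂ : MvPolynomial (Fin 4) k) ∈
      RingHom.ker (MvPolynomial.aeval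
        (fun i : Fin 4 => (Polynomial.X : Polynomial k) ^ n i)).toRingHom := by
    rw [hgen]; exact Ideal.subset_span (Set.mem_insert_of_mem _ (Set.mem_insert_of_mem _ (Set.mem_insert _ _)))
  have mem₄ : (X 3 ^ α₄ - X 1 ^ α₄₂ * X 2 ^ α₄₃ : MvPolynomial (Fin 4) k) ∈
      RingHom.ker (MvPolynomial.aeval
        (fun i : Fin 4 => (Polynomial.X : Polynomial k) ^ n i)).toRingHom := by
    rw [hgen]; exact Ideal.subset_span (Set.mem_insert_of_mem _ (Set.mem_insert_of_mem _ (Set.mem_insert_of_mem _ (Set.mem_insert _ _))))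
  have mem₅ : (X 0 ^ α₂₁ * X 2 ^ α₄₃ - X 1 ^ α₃₂ * X 3 ^ α₁₄ : MvPolynomial (Fin 4) k) ∈
      RingHom.ker (MvPolynomial.aeval
        (fun i : Fin 4 => (Polynomial.X : Polynomial k) ^ n i)).toRingHom := by
    rw [hgen]; exact Ideal.subset_span (Set.mem_insert_of_mem _ (Set.mem_insert_of_mem _ (Set.mem_insert_of_mem _ (Set.mem_insert_of_mem _ rfl))))
  have e₁ : n 0 * α₁ = n 2 * α₁₃ + n 3 * α₁₄ := bres_ker_eq n mem₁
  have e₂ : n 1 * α₂ = n 0 * α₂₁ + n 3 * α₂₄ := bres_ker_eq n mem₂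
  have e₃ : n 2 * α₃ = n 0 * α₃₁ + n 1 * α₃₂ := bres_ker_eq n mem₃
  have e₄ : n 3 * α₄ = n 1 * α₄₂ + n 2 * α₄₃ := bres_ker_eq n mem₄
  have e₅ : n 0 * α₂₁ + n 2 * α₄₃ = n 1 * α₃₂ + n 3 * α₁₄ := bres_ker_eq' n mem₅
  -- the four inequalities from minimality
  have le₁ : α₁ ≤ α₂₁ + α₃₁ := by
    refine hα₁.2 ⟨by omega, ?_⟩
    have hs : (α₃ - α₄₃) + α₄₃ = α₃ := Nat.sub_add_cancel h43.2.le
    have hs' : (α₃ - α₄₃) * n 2 + α₄₃ * n 2 = α₃ * n 2 := by rw [← Nat.add_mul, hs]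
    have key : (α₂₁ + α₃₁) * n 0 = (α₃ - α₄₃) * n 2 + α₁₄ * n 3 := by
      linarith only [e₃, e₅, hs']
    rw [key]
    exact bres_mem_closure n 0 2 3 (by decide) (by decide) _ _
  have le₂ : α₂ ≤ α₃₂ + α₄₂ := by
    refine hα₂.2 ⟨by omega, ?_⟩
    have hs : (α₄ - α₁₄) + α₁₄ = α₄ := Nat.sub_add_cancel h14.2.le
    have hs' : (α₄ - α₁₄) * n 3 + α₁₄ * n 3 = α₄ * n 3 := by rw [← Nat.add_mul, hs]
    have key : (α₃₂ + α₄₂) * n 1 = α₂₁ * n 0 + (α₄ - α₁₄) * n 3 := by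
      linarith only [e₄, e₅, hs']
    rw [key]
    exact bres_mem_closure n 1 0 3 (by decide) (by decide) _ _
  have le₃ : α₃ ≤ α₁₃ + α₄₃ := by
    refine hα₃.2 ⟨by omega, ?_⟩
    have hs : (α₁ - α₂₁) + α₂₁ = α₁ := Nat.sub_add_cancel h21.2.le
    have hs' : (α₁ - α₂₁) * n 0 + α₂₁ * n 0 = α₁ * n 0 := by rw [← Nat.add_mul, hs]
    have key : (α₁₃ + α₄₃) * n 2 = (α₁ - α₂₁) * n 0 + α₃₂ * n 1 := by
      linarith only [e₁, e₅, hs']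
    rw [key]
    exact bres_mem_closure n 2 0 1 (by decide) (by decide) _ _
  have le₄ : α₄ ≤ α₁₄ + α₂₄ := by
    refine hα₄.2 ⟨by omega, ?_⟩
    have hs : (α₂ - α₃₂) + α₃₂ = α₂ := Nat.sub_add_cancel h32.2.le
    have hs' : (α₂ - α₃₂) * n 1 + α₃₂ * n 1 = α₂ * n 1 := by rw [← Nat.add_mul, hs]
    have key : (α₁₄ + α₂₄) * n 3 = (α₂ - α₃₂) * n 1 + α₄₃ * n 2 := by
      linarith only [e₂, e₅, hs']
    rw [key]
    exact bres_mem_closure n 3 1 2 (by decide) (by decide) _ _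
  -- sum the four equations and conclude
  obtain ⟨d₁, hd₁⟩ := Nat.le.dest le₁
  obtain ⟨d₂, hd₂⟩ := Nat.le.dest le₂
  obtain ⟨d₃, hd₃⟩ := Nat.le.dest le₃
  obtain ⟨d₄, hd₄⟩ := Nat.le.dest le₄
  have E₁ : n 0 * (α₂₁ + α₃₁) = n 0 * α₁ + n 0 * d₁ := by rw [← hd₁]; ring
  have E₂ : n 1 * (α₃₂ + α₄₂) = n 1 * α₂ + n 1 * d₂ := by rw [← hd₂]; ring
  have E₃ : n 2 * (α₁₃ + α₄₃) = n 2 * α₃ + n 2 * d₃ := by rw [← hd₃]; ring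
  have E₄ : n 3 * (α₁₄ + α₂₄) = n 3 * α₄ + n 3 * d₄ := by rw [← hd₄]; ring
  have hsum : n 0 * d₁ + n 1 * d₂ + n 2 * d₃ + n 3 * d₄ = 0 := by
    linarith only [e₁, e₂, e₃, e₄, E₁, E₂, E₃, E₄]
  have h0 := hpos 0; have h1 := hpos 1; have h2 := hpos 2; have h3 := hpos 3
  have hd : d₁ = 0 ∧ d₂ = 0 ∧ d₃ = 0 ∧ d₄ = 0 := by
    rcases Nat.eq_zero_of_add_eq_zero hsum with ⟨h', h4'⟩
    rcases Nat.eq_zero_of_add_eq_zero h' with ⟨h'', h3'⟩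
    rcases Nat.eq_zero_of_add_eq_zero h'' with ⟨h1', h2'⟩
    rcases Nat.mul_eq_zero.1 h1' with h | h
    on_goal 2 => rcases Nat.mul_eq_zero.1 h2' with h | h
    all_goals first | omega | (rcases Nat.mul_eq_zero.1 h3' with h | h)
    all_goals first | omega | (rcases Nat.mul_eq_zero.1 h4' with h | h)
    all_goals omega
  omega
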